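/- Let n ≥ 1 be an integer. Define a_{2m} = m·(2m−2)! / (2^{3m−1}·(m!)²·∏_{j=0}^{m−1}(n+2j)) for m ≥ 1 and b_{2m} = 1/(2^{3m}·m!). Then a_{2m}/b_{2m} = 2m·(2m−2)! / (m!·∏_{j=0}^{m−1}(n+2j)) tends to +∞ as m → ∞. -/

import Mathlib

noncomputable def hplaneCoef (n m : ℕ) : ℝ :=
  ((m : ℝ) * (Nat.factorial (2*m - 2) : ℝ)) /
    ((2:ℝ)^(3*m - 1) * ((Nat.factorial m : ℝ))^2 *
      ∏ j ∈ Finset.range m, ((n : ℝ) + 2*(j : ℝ)))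

/-- The coefficient of `r^{2m}` in `e^{r²/8}`. -/
noncomputable def gaussCoef (m : ℕ) : ℝ := 1 / ((2:ℝ)^(3*m) * (Nat.factorial m : ℝ))

/-!
The ratio `ρ m = a_{2m}/b_{2m}` satisfies `ρ (m+1) = ρ m · 2(2m−1)/(n+2m)`. The factor tends to `2`,
so it is at least `3/2` once `m ≥ 2n+2`, and from there on `ρ` grows at least geometrically.
-/

open Filter Finset

noncomputable def hplaneGaussRatio (n m : ℕ) : ℝ :=
  2 * m * (2 * m - 2).factorial / (m.factorial * ∏ j ∈ range m, ((n : ℝ) + 2 * j))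

theorem tendsto_atTop_of_geom_le_of_ge {v : ℕ → ℝ} {c : ℝ} {N : ℕ} (h₀ : 0 < v N) (hc : 1 < c)
    (hu : ∀ m, N ≤ m → c * v m ≤ v (m + 1)) : Tendsto v atTop atTop :=
  (tendsto_add_atTop_iff_nat N).mp <|
    tendsto_atTop_of_geom_le (v := fun k ↦ v (k + N)) (by simpa using h₀) hc fun k ↦ by
      simpa only [Nat.add_right_comm k 1 N] using hu (k + N) (Nat.le_add_left N k)

lemma prod_add_two_mul_pos {x : ℝ} (hx : 0 < x) (m : ℕ) :
    0 < ∏ j ∈ range m, (x + 2 * (j : ℝ)) :=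
  prod_pos fun j _ ↦ by positivity

lemma hplaneCoef_div_gaussCoef (n : ℕ) {m : ℕ} (hm : 1 ≤ m) :
    hplaneCoef n m / gaussCoef m = hplaneGaussRatio n m := by
  have hpow : (2 : ℝ) ^ (3 * m) = 2 * 2 ^ (3 * m - 1) := by
    rw [← pow_succ', Nat.sub_add_cancel (by omega)]
  have hfac : (Nat.factorial m : ℝ) ≠ 0 := by positivity
  unfold hplaneCoef gaussCoef hplaneGaussRatio
  rw [hpow]
  field_simp

lemma hplaneGaussRatio_succ (n : ℕ) {m : ℕ} (hm : 1 ≤ m) :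
    hplaneGaussRatio n (m + 1) = hplaneGaussRatio n m * (2 * (2 * m - 1) / (n + 2 * m)) := by
  have hfac : ((2 * (m + 1) - 2).factorial : ℝ) =
      2 * m * (2 * m - 1) * (2 * m - 2).factorial := by
    rw [show 2 * (m + 1) - 2 = 2 * m - 2 + 1 + 1 by omega, Nat.factorial_succ, Nat.factorial_succ]
    push_cast [Nat.cast_sub (show 2 ≤ 2 * m by omega)]
    ring
  unfold hplaneGaussRatio
  rw [hfac, Nat.factorial_succ, prod_range_succ]
  field_simp
  push_cast
  ring

lemma hplaneGaussRatio_pos {n m : ℕ} (hn : 1 ≤ n) (hm : 1 ≤ m) : 0 < hplaneGaussRatio n m := by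
  have hm' : (0 : ℝ) < m := by exact_mod_cast hm
  unfold hplaneGaussRatio
  exact div_pos (by positivity)
    (mul_pos (by positivity) (prod_add_two_mul_pos (by exact_mod_cast hn) m))

lemma three_halves_le_succ_factor {n m : ℕ} (hm : 2 * n + 2 ≤ m) :
    (3 / 2 : ℝ) ≤ 2 * (2 * m - 1) / (n + 2 * m) := by
  have hm' : (2 * n + 2 : ℝ) ≤ m := by exact_mod_cast hm
  have hn : (0 : ℝ) ≤ n := n.cast_nonneg
  rw [le_div_iff₀ (by linarith)]
  linarith

/-- `a_{2m}/b_{2m} = 2m(2m−2)!/(m!·∏_{j=0}^{m−1}(n+2j))`, and this ratio tends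
to `+∞` as `m → ∞`. -/
theorem stmt16 (n : ℕ) (hn : 1 ≤ n) :
    (∀ m : ℕ, 1 ≤ m →
      hplaneCoef n m / gaussCoef m
        = (2*(m : ℝ) * (Nat.factorial (2*m - 2) : ℝ)) /
            ((Nat.factorial m : ℝ) * ∏ j ∈ Finset.range m, ((n : ℝ) + 2*(j : ℝ)))) ∧
    Filter.Tendsto (fun m : ℕ => hplaneCoef n m / gaussCoef m)
      Filter.atTop Filter.atTop := by
  refine ⟨fun m hm ↦ hplaneCoef_div_gaussCoef n hm, ?_⟩
  refine tendsto_atTop_of_geom_le_of_ge (N := 2 * n + 2) (c := 3 / 2) ?_ (by norm_num) ?_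
  · rw [hplaneCoef_div_gaussCoef n (by omega)]
    exact hplaneGaussRatio_pos hn (by omega)
  · intro m hm
    rw [hplaneCoef_div_gaussCoef n (by omega), hplaneCoef_div_gaussCoef n (by omega),
      hplaneGaussRatio_succ n (by omega), mul_comm]
    exact mul_le_mul_of_nonneg_left (three_halves_le_succ_factor hm)
      (hplaneGaussRatio_pos hn (by omega)).le
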